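/- arXiv:1802.07440 — 2 statements merged into one kernel-verified Lean document; each statement's English description precedes it below -/
import Mathlib

section
/- Let H = ([n_H], E_H) be a graph and G the roommates instance constructed from H as described. For every popular matching M in G, the set C = {i ∈ [n_H] : (a_i,b_i) ∈ M} is a vertex cover of H. -/
open scoped Classical

/-- A roommates instance: a (finite) graph `(V, adj)` together with a raw preference
relation: `pref u v w` means vertex `u` strictly prefers its neighbor `v` to its
neighbor `w`. -/
structure RoommatesInstance (V : Type) where
  adj : V → V → Prop
  adj_symm : ∀ u v, adj u v → adj v u
  adj_irrefl : ∀ u, ¬ adj u u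
  pref : V → V → V → Prop

namespace RoommatesInstance

variable {V : Type}

/-- The preference relation of each vertex is a strict linear order on its neighbors. -/
def StrictPrefs (G : RoommatesInstance V) : Prop :=
  (∀ u v w, G.pref u v w → G.adj u v ∧ G.adj u w) ∧
  (∀ u v w x, G.pref u v w → G.pref u w x → G.pref u v x) ∧
  (∀ u v w, G.pref u v w → ¬ G.pref u w v) ∧
  (∀ u v w, G.adj u v → G.adj u w → v ≠ w → G.pref u v w ∨ G.pref u w v)

/-- A matching, encoded by the partner function of the corresponding perfect matching
`M̃` of `G̃` (the graph `G` with a self-loop added at every vertex): `m u = u` means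
that `u` is unmatched in `M`, i.e. matched to itself along its self-loop in `M̃`. -/
structure Matching (G : RoommatesInstance V) where
  m : V → V
  invol : ∀ u, m (m u) = u
  adj_of_ne : ∀ u, m u ≠ u → G.adj u (m u)

variable (G : RoommatesInstance V)

/-- `u` considers `v` strictly better than `w`, where each of `v`, `w` is either a
neighbor of `u` or `u` itself (`u` itself stands for being unmatched, which every
vertex ranks below all of its neighbors). -/
def Better (u v w : V) : Prop :=
  (w = u ∧ v ≠ u) ∨ (v ≠ u ∧ w ≠ u ∧ G.pref u v w)

/-- vertex `u` prefers matching `M` to matching `M'` -/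
def Prefers (M M' : G.Matching) (u : V) : Prop :=
  G.Better u (M.m u) (M'.m u)

/-- `φ(M,M')`: the number of vertices preferring `M` to `M'` -/
noncomputable def phi [Fintype V] (M M' : G.Matching) : ℕ :=
  (Finset.univ.filter fun u => G.Prefers M M' u).card

/-- `Δ(M,M') = φ(M,M') - φ(M',M)` -/
noncomputable def delta [Fintype V] (M M' : G.Matching) : ℤ :=
  (G.phi M M' : ℤ) - (G.phi M' M : ℤ)

/-- a matching `M` is popular if it never loses a head-to-head election -/
def Popular [Fintype V] (M : G.Matching) : Prop :=
  ∀ M' : G.Matching, 0 ≤ G.delta M M'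

/-- `(u,v)` is a blocking edge to `M`: both endpoints prefer each other to their
assignments in `M̃`. -/
def Blocks (M : G.Matching) (u v : V) : Prop :=
  G.adj u v ∧ G.Better u v (M.m u) ∧ G.Better v u (M.m v)

/-- `(u,v)` is a negative edge to `M`: both endpoints prefer their assignments in `M̃`
to each other. -/
def Negative (M : G.Matching) (u v : V) : Prop :=
  G.adj u v ∧ G.Better u (M.m u) v ∧ G.Better v (M.m v) u

/-- `cost_M` on the edges of `G̃`: `cost_M(u,v) = 2` for a blocking edge, `-2` for a
negative edge, `0` otherwise; `cost_M(u,u) = 0` if `u` is unmatched in `M` and `-1`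
otherwise. -/
noncomputable def cost (M : G.Matching) (u v : V) : ℤ :=
  if u = v then (if M.m u = u then 0 else -1)
  else if G.Blocks M u v then 2
  else if G.Negative M u v then -2
  else 0

/-- a stable matching: no blocking edge -/
def Stable (M : G.Matching) : Prop := ∀ u v, ¬ G.Blocks M u v

/-- the number of edges of a matching -/
noncomputable def msize [Fintype V] (M : G.Matching) : ℕ :=
  (Finset.univ.filter fun u => M.m u ≠ u).card / 2

theorem cost_comm (M : G.Matching) (u v : V) : G.cost M u v = G.cost M v u := by
  unfold cost
  rcases eq_or_ne u v with rfl | huv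
  · rfl
  · rw [if_neg huv, if_neg (Ne.symm huv)]
    have hb : G.Blocks M u v ↔ G.Blocks M v u :=
      ⟨fun ⟨h1, h2, h3⟩ => ⟨G.adj_symm _ _ h1, h3, h2⟩,
       fun ⟨h1, h2, h3⟩ => ⟨G.adj_symm _ _ h1, h3, h2⟩⟩
    have hn : G.Negative M u v ↔ G.Negative M v u :=
      ⟨fun ⟨h1, h2, h3⟩ => ⟨G.adj_symm _ _ h1, h3, h2⟩,
       fun ⟨h1, h2, h3⟩ => ⟨G.adj_symm _ _ h1, h3, h2⟩⟩
    simp only [hb, hn]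

end RoommatesInstance

/-! ## The roommates instance `G` constructed from a vertex-cover instance `H` -/

/-- The vertex set of the roommates instance `G` built from a graph `H` on `Fin n`:
vertices `a_i, b_i, c_i, d_i` for every vertex `i` of `H`, and a vertex
`u^e_i = U i j` for every edge `e = (i,j)` of `H` (so `U i j` is the vertex of the
edge `{i,j}` associated with endpoint `i`; for non-adjacent pairs `(i,j)` the vertex
`U i j` is isolated, hence irrelevant). -/
inductive GV (n : ℕ) where
  | A (i : Fin n) | B (i : Fin n) | C (i : Fin n) | D (i : Fin n) | U (i j : Fin n)
  deriving DecidableEq, Fintype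

variable {n : ℕ}

/-- The edges of `G` (listed in one direction each):
`a_i` is adjacent to `b_i, c_i, d_i`; `b_i` is adjacent to `c_i` and to `u^e_i` for
every edge `e` of `H` incident to `i`; and `u^e_i` is adjacent to `u^e_j` for every
edge `e = (i,j)` of `H`. -/
def grel (H : SimpleGraph (Fin n)) : GV n → GV n → Prop := fun x y =>
  (∃ i, x = GV.A i ∧ (y = GV.B i ∨ y = GV.C i ∨ y = GV.D i)) ∨
  (∃ i, x = GV.B i ∧ y = GV.C i) ∨
  (∃ i j, x = GV.B i ∧ y = GV.U i j ∧ H.Adj i j) ∨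
  (∃ i j, x = GV.U i j ∧ y = GV.U j i ∧ H.Adj i j)

/-- Ranks encoding the preference lists of `G` (lower rank = more preferred):
`a_i : b_i ≻ c_i ≻ d_i`;  `b_i : a_i ≻ u^{e_1}_i ≻ ⋯ ≻ u^{e_k}_i ≻ c_i`
(the `u^e_i`'s ordered by the index of the other endpoint of `e`);
`c_i : a_i ≻ b_i`;  `d_i : a_i`;  `u^e_i : u^e_j ≻ b_i`. -/
def grank : GV n → GV n → ℕ := fun x y =>
  match x, y with
  | GV.A _, GV.B _ => 0
  | GV.A _, GV.C _ => 1
  | GV.A _, GV.D _ => 2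
  | GV.B _, GV.A _ => 0
  | GV.B _, GV.U _ k => 1 + k.val
  | GV.B _, GV.C _ => 1 + n
  | GV.C _, GV.A _ => 0
  | GV.C _, GV.B _ => 1
  | GV.D _, GV.A _ => 0
  | GV.U _ _, GV.U _ _ => 0
  | GV.U _ _, GV.B _ => 1
  | _, _ => 0

/-- The roommates instance `G` constructed from the vertex cover instance `H`. -/
def GofH (H : SimpleGraph (Fin n)) : RoommatesInstance (GV n) where
  adj x y := x ≠ y ∧ (grel H x y ∨ grel H y x)
  adj_symm := fun _ _ h => ⟨h.1.symm, h.2.symm⟩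
  adj_irrefl := fun _ h => h.1 rfl
  pref u v w :=
    (u ≠ v ∧ (grel H u v ∨ grel H v u)) ∧ (u ≠ w ∧ (grel H u w ∨ grel H w u)) ∧
      grank u v < grank u w

/-! If a matching `M'` differs from `M` only on a set `S` of vertices, and all vertices of
`P ⊆ S` prefer `M'`, then `Δ(M, M') ≤ |S| - 2|P|`; so a popular matching admits no such
switch with `|S| < 2|P|`. Switches of this kind show that in a popular matching every `a_i` is
matched (else add `a_i d_i`), that `a_i d_i ∈ M` forces `b_i c_i ∈ M` (else switch to
`a_i c_i`), and that `a_i c_i ∉ M` (switch to `a_i b_i`, together with `a_k b_k` and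
`u^e_i u^e_k` if `b_i` is matched to `u^e_i`). Hence if neither endpoint of `e = (i,j)` is
covered, both gadgets are in the state `a d, b c` and `u^e_i u^e_j ∈ M`; switching to
`a_i c_i, b_i u^e_i, a_j c_j, b_j u^e_j` changes 10 vertices and is preferred by 6 of them. -/

namespace RoommatesInstance

variable {V : Type} {G : RoommatesInstance V}

theorem better_irrefl (hG : ∀ u v w, G.pref u v w → ¬ G.pref u w v) (u v : V) :
    ¬ G.Better u v v := by
  rintro (⟨h, h'⟩ | ⟨-, -, h⟩)
  · exact h' h
  · exact hG _ _ _ h h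

theorem better_asymm (hG : ∀ u v w, G.pref u v w → ¬ G.pref u w v) {u v w : V}
    (h : G.Better u v w) : ¬ G.Better u w v := by
  unfold Better at *
  have := hG u v w
  grind

namespace Matching

variable (M : G.Matching)

theorem m_eq_iff {x y : V} : M.m x = y ↔ x = M.m y :=
  ⟨fun h => h ▸ (M.invol x).symm, fun h => h ▸ M.invol y⟩

theorem eq_self_or_adj (x : V) : M.m x = x ∨ G.adj x (M.m x) :=
  or_iff_not_imp_left.2 (M.adj_of_ne x)

/-- `M.rematch u v h` matches `u` with `v`; their former partners become unmatched. -/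
noncomputable def rematch (u v : V) (h : G.adj u v) : G.Matching where
  m x := if x = u then v else if x = v then u else
    if M.m x = u ∨ M.m x = v then x else M.m x
  invol x := by
    have hvu : v ≠ u := fun e => G.adj_irrefl u (e ▸ h)
    by_cases hxu : x = u
    · simp [hxu, hvu]
    by_cases hxv : x = v
    · simp [hxv]
    by_cases hx : M.m x = u ∨ M.m x = v
    · simp [hxu, hxv, hx]
    · simp only [not_or] at hx
      simp [hxu, hxv, hx, M.invol]
  adj_of_ne x hne := by
    by_cases hxu : x = u
    · subst hxu; simpa using h
    by_cases hxv : x = v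
    · subst hxv; simpa [hxu] using G.adj_symm _ _ h
    by_cases hx : M.m x = u ∨ M.m x = v
    · simp [hxu, hxv, hx] at hne
    · simpa [hxu, hxv, hx] using M.adj_of_ne x (by simpa [hxu, hxv, hx] using hne)

@[simp]
theorem rematch_m (u v : V) (h : G.adj u v) (x : V) :
    (M.rematch u v h).m x = if x = u then v else if x = v then u else
      if M.m x = u ∨ M.m x = v then x else M.m x := rfl

end Matching

theorem not_popular_of_prefers [Fintype V] (hG : ∀ u v w, G.pref u v w → ¬ G.pref u w v)
    {M M' : G.Matching} (S P : Finset V) (hS : ∀ u ∉ S, M'.m u = M.m u)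
    (hP : ∀ u ∈ P, G.Prefers M' M u) (hcard : S.card < 2 * P.card) : ¬ G.Popular M := by
  intro hM
  have indifferent (u : V) (N N' : G.Matching) (h : N.m u = N'.m u) : ¬ G.Prefers N N' u := by
    rw [Prefers, h]
    exact better_irrefl hG u _
  have hPS : P ⊆ S := fun u hu => by
    by_contra huS
    exact indifferent u M' M (hS u huS) (hP u hu)
  have hlose : (Finset.univ.filter fun u => G.Prefers M M' u) ⊆ S \ P := by
    intro u hu
    rw [Finset.mem_filter] at hu
    refine Finset.mem_sdiff.2 ⟨?_, fun huP => better_asymm hG (hP u huP) hu.2⟩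
    by_contra huS
    exact indifferent u M M' (hS u huS).symm hu.2
  have hwin : P ⊆ Finset.univ.filter fun u => G.Prefers M' M u := fun u hu =>
    Finset.mem_filter.2 ⟨Finset.mem_univ u, hP u hu⟩
  have h1 := Finset.card_le_card hlose
  have h2 := Finset.card_le_card hwin
  rw [Finset.card_sdiff_of_subset hPS] at h1
  have := hM M'
  unfold delta phi at this
  omega

theorem Popular.not_unmatched_of_adj [Fintype V]
    (hG : ∀ u v w, G.pref u v w → ¬ G.pref u w v) {M : G.Matching} (hM : G.Popular M)
    {u v : V} (h : G.adj u v) (hu : M.m u = u) : M.m v ≠ v := by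
  intro hv
  have hvu : v ≠ u := fun e => G.adj_irrefl u (e ▸ h)
  refine not_popular_of_prefers hG (M' := M.rematch u v h) {u, v} {u, v} (fun x hx => ?_) ?_
    (by simp [hvu.symm]) hM
  · simp only [Finset.mem_insert, Finset.mem_singleton, not_or] at hx
    simp [hx.1, hx.2, M.m_eq_iff, hu, hv]
  · simp only [Finset.mem_insert, Finset.mem_singleton]
    rintro x (rfl | rfl) <;> simp [Prefers, Better, hu, hv, hvu, hvu.symm]

end RoommatesInstance

namespace GofH

open RoommatesInstance

variable {H : SimpleGraph (Fin n)}

theorem pref_asymm (u v w : GV n) : (GofH H).pref u v w → ¬ (GofH H).pref u w v :=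
  fun h h' => lt_asymm h.2.2 h'.2.2

theorem adj_iff {x y : GV n} : (GofH H).adj x y ↔ x ≠ y ∧ (grel H x y ∨ grel H y x) :=
  Iff.rfl

theorem pref_iff {u v w : GV n} : (GofH H).pref u v w ↔
    (GofH H).adj u v ∧ (GofH H).adj u w ∧ grank u v < grank u w := Iff.rfl

theorem eq_of_adj_D {i : Fin n} {y : GV n} (h : (GofH H).adj (GV.D i) y) : y = GV.A i := by
  obtain ⟨-, h | h⟩ := h <;> simp only [grel] at h <;> aesop

theorem eq_of_adj_C {i : Fin n} {y : GV n} (h : (GofH H).adj (GV.C i) y) :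
    y = GV.A i ∨ y = GV.B i := by
  obtain ⟨-, h | h⟩ := h <;> simp only [grel] at h <;> aesop

theorem eq_of_adj_A {i : Fin n} {y : GV n} (h : (GofH H).adj (GV.A i) y) :
    y = GV.B i ∨ y = GV.C i ∨ y = GV.D i := by
  obtain ⟨-, h | h⟩ := h <;> simp only [grel] at h <;> aesop

theorem eq_of_adj_B {i : Fin n} {y : GV n} (h : (GofH H).adj (GV.B i) y) :
    y = GV.A i ∨ y = GV.C i ∨ ∃ k, y = GV.U i k ∧ H.Adj i k := by
  obtain ⟨-, h | h⟩ := h <;> simp only [grel] at h <;> aesop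

theorem eq_of_adj_U {i j : Fin n} {y : GV n} (h : (GofH H).adj (GV.U i j) y) :
    y = GV.U j i ∨ y = GV.B i := by
  obtain ⟨-, h | h⟩ := h <;> simp only [grel] at h <;> aesop

variable {M : (GofH H).Matching}

theorem partner_A_ne_self (hM : (GofH H).Popular M) (i : Fin n) : M.m (GV.A i) ≠ GV.A i := by
  intro hA
  have hD := hM.not_unmatched_of_adj pref_asymm (v := GV.D i) (by simp [adj_iff, grel]) hA
  rcases M.eq_self_or_adj (GV.D i) with h | h
  · exact hD h
  · have := (M.m_eq_iff).1 (eq_of_adj_D h)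
    simp [hA] at this

theorem partner_B_eq_C_of_partner_A_eq_D (hM : (GofH H).Popular M) {i : Fin n}
    (hA : M.m (GV.A i) = GV.D i) : M.m (GV.B i) = GV.C i := by
  by_contra hB
  have hC : M.m (GV.C i) = GV.C i := by
    rcases M.eq_self_or_adj (GV.C i) with h | h
    · exact h
    · rcases eq_of_adj_C h with h | h <;> simp [M.m_eq_iff, hA] at h
      exact (hB h.symm).elim
  refine not_popular_of_prefers pref_asymm
    (M' := M.rematch (GV.A i) (GV.C i) (by simp [adj_iff, grel]))
    {GV.A i, GV.C i, GV.D i} {GV.A i, GV.C i} (fun x hx => ?_) ?_ (by simp) hM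
  · simp only [Finset.mem_insert, Finset.mem_singleton, not_or] at hx
    simp [hx, M.m_eq_iff, hA, hC]
  · simp only [Finset.mem_insert, Finset.mem_singleton]
    rintro x (rfl | rfl) <;> simp [Prefers, Better, pref_iff, adj_iff, grel, grank, hA, hC]

theorem not_popular_of_partner_A_eq_C_of_partner_B_eq_self {i : Fin n}
    (hA : M.m (GV.A i) = GV.C i) (hB : M.m (GV.B i) = GV.B i) : ¬ (GofH H).Popular M := by
  refine not_popular_of_prefers pref_asymm
    (M' := M.rematch (GV.A i) (GV.B i) (by simp [adj_iff, grel]))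
    {GV.A i, GV.B i, GV.C i} {GV.A i, GV.B i} (fun x hx => ?_) ?_ (by simp)
  · simp only [Finset.mem_insert, Finset.mem_singleton, not_or] at hx
    simp [hx, M.m_eq_iff, hA, hB]
  · simp only [Finset.mem_insert, Finset.mem_singleton]
    rintro x (rfl | rfl) <;> simp [Prefers, Better, pref_iff, adj_iff, grel, grank, hA, hB]

theorem not_popular_of_partner_B_eq_U_of_partner_U_eq_self {i k : Fin n} (hik : H.Adj i k)
    (hA : M.m (GV.A i) = GV.C i) (hB : M.m (GV.B i) = GV.U i k)
    (hUk : M.m (GV.U k i) = GV.U k i) : ¬ (GofH H).Popular M := by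
  have hU : M.m (GV.U i k) = GV.B i := M.m_eq_iff.2 hB.symm
  refine not_popular_of_prefers pref_asymm
    (M' := (M.rematch (GV.A i) (GV.B i) (by simp [adj_iff, grel])).rematch
      (GV.U i k) (GV.U k i) (by simp [adj_iff, grel, hik, hik.ne]))
    {GV.A i, GV.B i, GV.C i, GV.U i k, GV.U k i} {GV.A i, GV.B i, GV.U i k, GV.U k i}
    (fun x hx => ?_) ?_ (by simp [hik.ne, hik.ne'])
  · simp only [Finset.mem_insert, Finset.mem_singleton, not_or] at hx
    simp [hx, M.m_eq_iff, hA, hB, hU, hUk]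
  · simp only [Finset.mem_insert, Finset.mem_singleton]
    rintro x (rfl | rfl | rfl | rfl) <;>
      simp [Prefers, Better, pref_iff, adj_iff, grel, grank, hA, hB, hU, hUk, hik, hik.ne,
        hik.ne']

theorem not_popular_of_partner_B_eq_U_of_partner_U_eq_B {i k : Fin n} (hik : H.Adj i k)
    (hA : M.m (GV.A i) = GV.C i) (hB : M.m (GV.B i) = GV.U i k)
    (hAk : M.m (GV.A k) = GV.C k) (hBk : M.m (GV.B k) = GV.U k i) : ¬ (GofH H).Popular M := by
  have hU : M.m (GV.U i k) = GV.B i := M.m_eq_iff.2 hB.symm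
  have hUk : M.m (GV.U k i) = GV.B k := M.m_eq_iff.2 hBk.symm
  refine not_popular_of_prefers pref_asymm
    (M' := ((M.rematch (GV.A i) (GV.B i) (by simp [adj_iff, grel])).rematch
      (GV.A k) (GV.B k) (by simp [adj_iff, grel])).rematch
      (GV.U i k) (GV.U k i) (by simp [adj_iff, grel, hik, hik.ne]))
    {GV.A i, GV.B i, GV.C i, GV.U i k, GV.U k i, GV.A k, GV.B k, GV.C k}
    {GV.A i, GV.B i, GV.U i k, GV.U k i, GV.A k, GV.B k}
    (fun x hx => ?_) ?_ (by simp [hik.ne, hik.ne'])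
  · simp only [Finset.mem_insert, Finset.mem_singleton, not_or] at hx
    simp [hx, M.m_eq_iff, hA, hB, hU, hUk, hAk, hBk]
  · simp only [Finset.mem_insert, Finset.mem_singleton]
    rintro x (rfl | rfl | rfl | rfl | rfl | rfl) <;>
      simp [Prefers, Better, pref_iff, adj_iff, grel, grank, hA, hB, hU, hUk, hAk, hBk, hik,
        hik.symm, hik.ne, hik.ne']

theorem partner_A_ne_C (hM : (GofH H).Popular M) (i : Fin n) : M.m (GV.A i) ≠ GV.C i := by
  intro hA
  have hC : M.m (GV.C i) = GV.A i := M.m_eq_iff.2 hA.symm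
  rcases M.eq_self_or_adj (GV.B i) with hB | hB
  · exact not_popular_of_partner_A_eq_C_of_partner_B_eq_self hA hB hM
  rcases eq_of_adj_B hB with hB | hB | ⟨k, hB, hik⟩
  · simp [M.m_eq_iff, hA] at hB
  · simp [M.m_eq_iff, hC] at hB
  rcases M.eq_self_or_adj (GV.U k i) with hUk | hUk
  · exact not_popular_of_partner_B_eq_U_of_partner_U_eq_self hik hA hB hUk hM
  rcases eq_of_adj_U hUk with hUk | hUk
  · simp [M.m_eq_iff, M.m_eq_iff.2 hB.symm] at hUk
  have hBk : M.m (GV.B k) = GV.U k i := M.m_eq_iff.2 hUk.symm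
  have hAk : M.m (GV.A k) = GV.C k := by
    rcases M.eq_self_or_adj (GV.A k) with h | h
    · exact absurd h (partner_A_ne_self hM k)
    rcases eq_of_adj_A h with h | h | h
    · simp [M.m_eq_iff, hBk] at h
    · exact h
    · simp [partner_B_eq_C_of_partner_A_eq_D hM h] at hBk
  exact not_popular_of_partner_B_eq_U_of_partner_U_eq_B hik hA hB hAk hBk hM

theorem partner_A_eq_D_of_ne_B (hM : (GofH H).Popular M) {i : Fin n}
    (h : M.m (GV.A i) ≠ GV.B i) : M.m (GV.A i) = GV.D i := by
  rcases M.eq_self_or_adj (GV.A i) with hA | hA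
  · exact absurd hA (partner_A_ne_self hM i)
  rcases eq_of_adj_A hA with hA | hA | hA
  · exact absurd hA h
  · exact absurd hA (partner_A_ne_C hM i)
  · exact hA

theorem partner_U_eq_of_partner_B_eq_C (hM : (GofH H).Popular M) {i j : Fin n}
    (hij : H.Adj i j) (hBi : M.m (GV.B i) = GV.C i) (hBj : M.m (GV.B j) = GV.C j) :
    M.m (GV.U i j) = GV.U j i := by
  have not_B {x y : Fin n} (hBx : M.m (GV.B x) = GV.C x) : M.m (GV.U x y) ≠ GV.B x := by
    simp [M.m_eq_iff, hBx]
  rcases M.eq_self_or_adj (GV.U i j) with hUi | hUi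
  · rcases M.eq_self_or_adj (GV.U j i) with hUj | hUj
    · exact absurd hUj (hM.not_unmatched_of_adj pref_asymm
        (by simp [adj_iff, grel, hij, hij.ne]) hUi)
    rcases eq_of_adj_U hUj with hUj | hUj
    · exact M.m_eq_iff.2 hUj.symm
    · exact absurd hUj (not_B hBj)
  rcases eq_of_adj_U hUi with hUi | hUi
  · exact hUi
  · exact absurd hUi (not_B hBi)

theorem not_popular_of_partner_B_eq_C {i j : Fin n} (hij : H.Adj i j)
    (hAi : M.m (GV.A i) = GV.D i) (hBi : M.m (GV.B i) = GV.C i) (hAj : M.m (GV.A j) = GV.D j)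
    (hBj : M.m (GV.B j) = GV.C j) (hU : M.m (GV.U i j) = GV.U j i) : ¬ (GofH H).Popular M := by
  have hCi : M.m (GV.C i) = GV.B i := M.m_eq_iff.2 hBi.symm
  have hCj : M.m (GV.C j) = GV.B j := M.m_eq_iff.2 hBj.symm
  have hU' : M.m (GV.U j i) = GV.U i j := M.m_eq_iff.2 hU.symm
  refine not_popular_of_prefers pref_asymm
    (M' := (((M.rematch (GV.A i) (GV.C i) (by simp [adj_iff, grel])).rematch
      (GV.B i) (GV.U i j) (by simp [adj_iff, grel, hij])).rematch
      (GV.A j) (GV.C j) (by simp [adj_iff, grel])).rematch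
      (GV.B j) (GV.U j i) (by simp [adj_iff, grel, hij.symm]))
    {GV.A i, GV.B i, GV.C i, GV.D i, GV.U i j, GV.A j, GV.B j, GV.C j, GV.D j, GV.U j i}
    {GV.A i, GV.B i, GV.C i, GV.A j, GV.B j, GV.C j}
    (fun x hx => ?_) ?_ (by simp [hij.ne, hij.ne'])
  · simp only [Finset.mem_insert, Finset.mem_singleton, not_or] at hx
    simp [hx, M.m_eq_iff, hAi, hBi, hCi, hAj, hBj, hCj, hU, hU']
  · simp only [Finset.mem_insert, Finset.mem_singleton]
    rintro x (rfl | rfl | rfl | rfl | rfl | rfl) <;>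
      simp [Prefers, Better, pref_iff, adj_iff, grel, grank, hAi, hBi, hCi, hAj, hBj, hCj,
        hij, hij.symm, hij.ne, hij.ne']

end GofH

open RoommatesInstance in
/-- For every popular matching `M` in `G`, the set
`C = {i : (a_i,b_i) ∈ M}` is a vertex cover of `H`. -/
theorem popular_gives_vertex_cover {n : ℕ} (H : SimpleGraph (Fin n))
    (M : (GofH H).Matching) (hM : (GofH H).Popular M) :
    ∀ i j, H.Adj i j → M.m (GV.A i) = GV.B i ∨ M.m (GV.A j) = GV.B j := by
  intro i j hij
  by_contra! h
  have hAi := GofH.partner_A_eq_D_of_ne_B hM h.1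
  have hAj := GofH.partner_A_eq_D_of_ne_B hM h.2
  have hBi := GofH.partner_B_eq_C_of_partner_A_eq_D hM hAi
  have hBj := GofH.partner_B_eq_C_of_partner_A_eq_D hM hAj
  exact GofH.not_popular_of_partner_B_eq_C hij hAi hBi hAj hBj
    (GofH.partner_U_eq_of_partner_B_eq_C hM hij hBi hBj) hM
end

section
/- Let G = (A ∪ B, E) be a bipartite instance with strict preference lists, M a popular matching in G, α ∈ {0,±1}^{A∪B} a witness of M, and 𝒞 a connected component of the popular subgraph F_G. Then either α_u = 0 for all vertices u ∈ 𝒞, or α_u ∈ {−1,+1} for all vertices u ∈ 𝒞. Moreover, if 𝒞 contains one or more unstable vertices, then either all unstable vertices in 𝒞 are matched in M or none of them is matched in M. -/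
open scoped Classical

namespace RoommatesInstance

variable {V : Type} (G : RoommatesInstance V)

/-- A witness of the popularity of `M`: an optimal dual solution, i.e. a vector `α`
with `Σ_u α_u = 0`, `α_u + α_v ≥ cost_M(u,v)` for every edge `(u,v)` and
`α_u ≥ cost_M(u,u)` for every vertex `u`. -/
def IsWitness [Fintype V] (M : G.Matching) (α : V → ℝ) : Prop :=
  (∑ u, α u) = 0 ∧
  (∀ u v, G.adj u v → (G.cost M u v : ℝ) ≤ α u + α v) ∧
  (∀ u, (G.cost M u u : ℝ) ≤ α u)

/-- `(u,v)` is a popular edge: it belongs to some popular matching of `G`. -/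
def PopularEdge [Fintype V] (u v : V) : Prop :=
  u ≠ v ∧ ∃ N : G.Matching, G.Popular N ∧ N.m u = v

/-- `u` is an unstable vertex: it is left unmatched in some stable matching of `G`. -/
def Unstable (u : V) : Prop :=
  ∃ S : G.Matching, G.Stable S ∧ S.m u = u

/-- `u` and `v` lie in the same connected component of the popular subgraph `F_G`
(the subgraph of `G` on the popular edges). -/
def PopConn [Fintype V] : V → V → Prop :=
  Relation.ReflTransGen (G.PopularEdge)

end RoommatesInstance

/-!
Comparing a matching `N` with `M` vertex by vertex, the votes of the two endpoints of an
edge of `Ñ` add up to its `cost_M`, so `2 Δ(N, M) = Σ_u cost_M(u, Ñ(u))` (self-loops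
doubled). Summing the witness constraints along `Ñ` gives `Σ_u (α_u + α_{Ñ(u)}) = 0`, hence
whenever `Δ(N, M) ≥ 0` every constraint on an edge of `Ñ` is tight. For a popular edge
`(u, w)` this gives `α_u + α_w = cost_M(u, w) ∈ {0, ±2}`, so with `α ∈ {0, ±1}` either both
or neither of `α_u, α_w` vanish. An unstable vertex `u` is unmatched in a stable, hence
popular, matching, so `α_u = cost_M(u, u)`, which vanishes exactly when `u` is unmatched
in `M`.
-/

namespace RoommatesInstance

variable {V : Type} {G : RoommatesInstance V}

theorem better_irrefl_s11 (hG : G.StrictPrefs) (u x : V) : ¬ G.Better u x x := by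
  rintro (⟨h1, h2⟩ | ⟨-, -, h⟩)
  · exact h2 h1
  · exact hG.2.2.1 u x x h h

theorem Better.asymm (hG : G.StrictPrefs) {u x y : V} (h : G.Better u x y) :
    ¬ G.Better u y x := by
  rcases h with ⟨h1, h2⟩ | ⟨h1, h2, h⟩ <;> rintro (⟨g1, g2⟩ | ⟨g1, g2, g⟩)
  · exact h2 g1
  · exact g1 h1
  · exact h1 g1
  · exact hG.2.2.1 u x y h g

theorem ne_of_adj {u x : V} (h : G.adj u x) : x ≠ u := by
  rintro rfl
  exact G.adj_irrefl _ h

theorem better_or_better_iff_ne (hG : G.StrictPrefs) {u x y : V}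
    (hx : x = u ∨ G.adj u x) (hy : y = u ∨ G.adj u y) :
    G.Better u x y ∨ G.Better u y x ↔ x ≠ y := by
  refine ⟨?_, fun hxy => ?_⟩
  · rintro h rfl
    exact h.elim (better_irrefl_s11 hG u x) (better_irrefl_s11 hG u x)
  rcases hx with rfl | hx <;> rcases hy with rfl | hy
  · exact absurd rfl hxy
  · exact Or.inr (Or.inl ⟨rfl, ne_of_adj hy⟩)
  · exact Or.inl (Or.inl ⟨rfl, ne_of_adj hx⟩)
  · rcases hG.2.2.2 u x y hx hy hxy with h | h
    · exact Or.inl (Or.inr ⟨ne_of_adj hx, ne_of_adj hy, h⟩)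
    · exact Or.inr (Or.inr ⟨ne_of_adj hy, ne_of_adj hx, h⟩)

theorem Matching.eq_or_adj (M : G.Matching) (u : V) : M.m u = u ∨ G.adj u (M.m u) :=
  or_iff_not_imp_left.2 (M.adj_of_ne u)

theorem Matching.sum_comp [Fintype V] {β : Type*} [AddCommMonoid β] (N : G.Matching)
    (f : V → β) : ∑ u, f (N.m u) = ∑ u, f u :=
  Equiv.sum_comp (Function.Involutive.toPerm N.m N.invol) f

theorem cost_self_eq_zero_iff (M : G.Matching) (u : V) : G.cost M u u = 0 ↔ M.m u = u := by
  simp [cost]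

theorem cost_of_ne (M : G.Matching) {u v : V} (huv : u ≠ v) :
    G.cost M u v = 2 ∨ G.cost M u v = -2 ∨ G.cost M u v = 0 := by
  unfold cost
  rw [if_neg huv]
  split_ifs <;> simp

noncomputable def vote (G : RoommatesInstance V) (N M : G.Matching) (u : V) : ℤ :=
  (if G.Prefers N M u then 1 else 0) - (if G.Prefers M N u then 1 else 0)

theorem delta_eq_sum_vote [Fintype V] (N M : G.Matching) :
    G.delta N M = ∑ u, G.vote N M u := by
  unfold delta phi vote
  rw [Finset.sum_sub_distrib]
  push_cast [Finset.card_filter]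
  rfl

theorem delta_swap [Fintype V] (M N : G.Matching) : G.delta M N = -G.delta N M := by
  unfold delta
  ring

/-- `cost_M` of the edge of `Ñ` at `u`, a self-loop counted twice, so that summing over
all vertices counts every edge of `Ñ` twice. -/
noncomputable def edgeCost (G : RoommatesInstance V) (M N : G.Matching) (u : V) : ℤ :=
  if N.m u = u then 2 * G.cost M u u else G.cost M u (N.m u)

theorem vote_of_unmatched (M N : G.Matching) {u : V} (hu : N.m u = u) :
    G.vote N M u = G.cost M u u := by
  by_cases hm : M.m u = u <;> simp [vote, Prefers, Better, cost, hu, hm]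

theorem vote_add_vote_of_matched (hG : G.StrictPrefs) (M N : G.Matching) {u : V}
    (hu : N.m u ≠ u) : G.vote N M u + G.vote N M (N.m u) = G.cost M u (N.m u) := by
  set w := N.m u with hw
  have hwu : N.m w = u := N.invol u
  have hadj : G.adj u w := N.adj_of_ne u hu
  have hMw : M.m w = u ↔ M.m u = w :=
    ⟨fun h => by rw [← h, M.invol], fun h => by rw [← h, M.invol]⟩
  have hu_cmp : G.Better u w (M.m u) ∨ G.Better u (M.m u) w ↔ M.m u ≠ w :=
    (better_or_better_iff_ne hG (Or.inr hadj) (M.eq_or_adj u)).trans ne_comm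
  have hw_cmp : G.Better w u (M.m w) ∨ G.Better w (M.m w) u ↔ M.m u ≠ w :=
    (better_or_better_iff_ne hG (Or.inr (G.adj_symm _ _ hadj)) (M.eq_or_adj w)).trans
      (ne_comm.trans (not_congr hMw))
  have hu_asymm := @Better.asymm _ _ hG u w (M.m u)
  have hw_asymm := @Better.asymm _ _ hG w u (M.m w)
  simp only [vote, Prefers, cost, Blocks, Negative, hwu, if_neg (Ne.symm hu), hadj,
    true_and]
  by_cases h1 : G.Better u w (M.m u) <;> by_cases h2 : G.Better u (M.m u) w <;>
    by_cases h3 : G.Better w u (M.m w) <;> by_cases h4 : G.Better w (M.m w) u <;>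
    simp_all

theorem vote_add_vote_partner (hG : G.StrictPrefs) (M N : G.Matching) (u : V) :
    G.vote N M u + G.vote N M (N.m u) = G.edgeCost M N u := by
  by_cases hu : N.m u = u
  · rw [edgeCost, if_pos hu, hu, vote_of_unmatched M N hu]
    ring
  · rw [edgeCost, if_neg hu]
    exact vote_add_vote_of_matched hG M N hu

theorem sum_edgeCost [Fintype V] (hG : G.StrictPrefs) (M N : G.Matching) :
    ∑ u, G.edgeCost M N u = 2 * G.delta N M := by
  calc ∑ u, G.edgeCost M N u
      = ∑ u, (G.vote N M u + G.vote N M (N.m u)) :=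
        Finset.sum_congr rfl fun u _ => (vote_add_vote_partner hG M N u).symm
    _ = 2 * G.delta N M := by
        rw [Finset.sum_add_distrib, N.sum_comp (G.vote N M), delta_eq_sum_vote]
        ring

theorem Stable.popular [Fintype V] (hG : G.StrictPrefs) {S : G.Matching} (hS : G.Stable S) :
    G.Popular S := by
  intro N
  have hle : ∀ u ∈ Finset.univ, G.edgeCost S N u ≤ 0 := by
    intro u _
    unfold edgeCost cost
    split_ifs
    all_goals first | omega | exact absurd ‹G.Blocks S _ _› (hS _ _)
  have := Finset.sum_nonpos hle
  rw [sum_edgeCost hG] at this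
  rw [delta_swap]
  omega

namespace IsWitness

variable [Fintype V] {M : G.Matching} {α : V → ℝ}

theorem edgeCost_le (hα : G.IsWitness M α) (N : G.Matching) (u : V) :
    (G.edgeCost M N u : ℝ) ≤ α u + α (N.m u) := by
  by_cases hu : N.m u = u
  · have := hα.2.2 u
    rw [edgeCost, if_pos hu, hu]
    push_cast
    linarith
  · rw [edgeCost, if_neg hu]
    exact hα.2.1 u (N.m u) (N.adj_of_ne u hu)

/-- Complementary slackness: a matching not beaten by `M` only uses edges of `G̃` on which
the witness constraints are tight. -/
theorem edgeCost_eq_of_delta_nonneg (hG : G.StrictPrefs) (hα : G.IsWitness M α)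
    {N : G.Matching} (hN : 0 ≤ G.delta N M) (u : V) :
    (G.edgeCost M N u : ℝ) = α u + α (N.m u) := by
  set slack : V → ℝ := fun u => α u + α (N.m u) - G.edgeCost M N u
  have hslack : ∀ u ∈ Finset.univ, 0 ≤ slack u := fun u _ =>
    sub_nonneg.2 (hα.edgeCost_le N u)
  have hsum : ∑ u, slack u = -2 * G.delta N M := by
    simp only [slack, Finset.sum_sub_distrib, Finset.sum_add_distrib, N.sum_comp α, hα.1,
      ← Int.cast_sum, sum_edgeCost hG]
    push_cast
    ring
  have hN' : (0 : ℝ) ≤ G.delta N M := by exact_mod_cast hN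
  have hzero : ∑ u, slack u = 0 :=
    le_antisymm (by linarith) (Finset.sum_nonneg hslack)
  have := (Finset.sum_eq_zero_iff_of_nonneg hslack).1 hzero u (Finset.mem_univ u)
  simp only [slack] at this
  linarith

theorem eq_cost_self_of_unstable (hG : G.StrictPrefs) (hα : G.IsWitness M α) {u : V}
    (hu : G.Unstable u) : α u = G.cost M u u := by
  obtain ⟨S, hS, hSu⟩ := hu
  have := hα.edgeCost_eq_of_delta_nonneg hG (hS.popular hG M) u
  rw [edgeCost, if_pos hSu, hSu] at this
  push_cast at this
  linarith

theorem eq_zero_iff_of_popularEdge (hG : G.StrictPrefs) (hα : G.IsWitness M α)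
    (h01 : ∀ u, α u = 0 ∨ α u = 1 ∨ α u = -1) {u w : V} (huw : G.PopularEdge u w) :
    α u = 0 ↔ α w = 0 := by
  obtain ⟨hne, N, hN, rfl⟩ := huw
  have hN_u : N.m u ≠ u := Ne.symm hne
  have htight := hα.edgeCost_eq_of_delta_nonneg hG (hN M) u
  rw [edgeCost, if_neg hN_u] at htight
  rcases cost_of_ne M hne with hc | hc | hc <;> rw [hc] at htight <;> push_cast at htight <;>
    rcases h01 u with h | h | h <;> rcases h01 (N.m u) with g | g | g <;>
    constructor <;> intro <;> linarith

theorem eq_zero_iff_of_popConn (hG : G.StrictPrefs) (hα : G.IsWitness M α)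
    (h01 : ∀ u, α u = 0 ∨ α u = 1 ∨ α u = -1) {u w : V} (huw : G.PopConn u w) :
    α u = 0 ↔ α w = 0 := by
  induction huw with
  | refl => exact Iff.rfl
  | tail _ hvw ih => exact ih.trans (hα.eq_zero_iff_of_popularEdge hG h01 hvw)

end IsWitness

end RoommatesInstance

open RoommatesInstance in
theorem witness_constant_parity_on_component_general {V : Type} [Fintype V]
    (G : RoommatesInstance V) (hG : G.StrictPrefs)
    (M : G.Matching)
    (α : V → ℝ) (hα : G.IsWitness M α)
    (h01 : ∀ u, α u = 0 ∨ α u = 1 ∨ α u = -1)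
    (v : V) :
    ((∀ w, G.PopConn v w → α w = 0) ∨
      (∀ w, G.PopConn v w → α w = 1 ∨ α w = -1)) ∧
    ((∃ w, G.PopConn v w ∧ G.Unstable w) →
      ((∀ w, G.PopConn v w → G.Unstable w → M.m w ≠ w) ∨
        (∀ w, G.PopConn v w → G.Unstable w → M.m w = w))) := by
  have hconn : ∀ w, G.PopConn v w → (α v = 0 ↔ α w = 0) := fun w hw =>
    hα.eq_zero_iff_of_popConn hG h01 hw
  have hunstable : ∀ w, G.Unstable w → (M.m w = w ↔ α w = 0) := fun w hw => by
    rw [hα.eq_cost_self_of_unstable hG hw, Int.cast_eq_zero, cost_self_eq_zero_iff]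
  by_cases hv : α v = 0
  · exact ⟨Or.inl fun w hw => (hconn w hw).1 hv,
      fun _ => Or.inr fun w hw hu => (hunstable w hu).2 ((hconn w hw).1 hv)⟩
  · exact ⟨Or.inr fun w hw => (h01 w).resolve_left fun h => hv ((hconn w hw).2 h),
      fun _ => Or.inl fun w hw hu hm => hv ((hconn w hw).2 ((hunstable w hu).1 hm))⟩

open RoommatesInstance in
/-- Let `M` be a popular matching of a bipartite instance `G`,
`α ∈ {0,±1}^{A∪B}` a witness of `M`, and `𝒞` a connected component of the popular
subgraph `F_G` (here `𝒞 = {w : PopConn v w}` for a vertex `v`).  Then either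
`α_u = 0` for all `u ∈ 𝒞` or `α_u ∈ {±1}` for all `u ∈ 𝒞`; moreover if `𝒞`
contains unstable vertices then either all unstable vertices of `𝒞` are matched in
`M` or none of them is. -/
theorem witness_constant_parity_on_component {V : Type} [Fintype V]
    (G : RoommatesInstance V) (hG : G.StrictPrefs)
    (A : Set V) (hbip : ∀ u v, G.adj u v → (u ∈ A ↔ v ∉ A))
    (M : G.Matching) (hM : G.Popular M)
    (α : V → ℝ) (hα : G.IsWitness M α)
    (h01 : ∀ u, α u = 0 ∨ α u = 1 ∨ α u = -1)
    (v : V) :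
    ((∀ w, G.PopConn v w → α w = 0) ∨
      (∀ w, G.PopConn v w → α w = 1 ∨ α w = -1)) ∧
    ((∃ w, G.PopConn v w ∧ G.Unstable w) →
      ((∀ w, G.PopConn v w → G.Unstable w → M.m w ≠ w) ∨
        (∀ w, G.PopConn v w → G.Unstable w → M.m w = w))) :=
  witness_constant_parity_on_component_general G hG M α hα h01 v
end
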